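/- arXiv:2011.04466 — 2 statements merged into one kernel-verified Lean document; each statement's English description precedes it below -/
import Mathlib

section
/- (Proposition 2, numerator: closed form for the distance covariance of the edge distribution.) Let A be a normalized symmetric adjacency matrix on Fin n, k i := ∑_j A i j, and x : Fin n → E where E is a Euclidean space. Define a i := ∑_{i'} (k i') * ‖x i − x i'‖, D := ∑_{i,i'} (k i) * (k i') * ‖x i − x i'‖, and the doubly centered distance δ i i' := ‖x i − x i'‖ − a i − a i' + D. Then ∑_{i,j} ∑_{i',j'} (A i j) * (A i' j') * (δ i i') * (δ j j') = ∑_{i,j} ∑_{i',j'} (A i j) * (A i' j') * ‖x i − x i'‖ * ‖x j − x j'‖ − 2 * ∑_{i,j} (A i j) * (a i) * (a j) + D^2. -/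
/-!
Write `d i i' = ‖x i - x i'‖` and `E(f, g) = edgePairSum A f g` for the expectation of
`f(X, X') * g(Y, Y')` over two independent edges. Both marginals of the edge distribution are `k`,
so `δ` is centred: its `k`-weighted sums over either index vanish. Against a centred kernel, every
term of `δ` that depends on one index only has expectation zero, hence
`E(δ, δ) = E(δ, d) = E(d, δ)`. Expanding the remaining `δ` leaves `E(d, d)`, two copies of
`∑ A i j * a i * a j` and `D * D`.
-/

open Finset

section EdgePairSum

variable {ι : Type*} [Fintype ι]

def edgePairSum (A f g : ι → ι → ℝ) : ℝ :=
  ∑ i, ∑ j, ∑ i', ∑ j', A i j * A i' j' * f i i' * g j j'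

theorem sum_sum_sum_sum_comm {β : Type*} [AddCommMonoid β] (F : ι → ι → ι → ι → β) :
    ∑ i, ∑ j, ∑ i', ∑ j', F i j i' j' = ∑ i', ∑ j', ∑ i, ∑ j, F i j i' j' :=
  calc _ = ∑ i, ∑ i', ∑ j', ∑ j, F i j i' j' :=
        sum_congr rfl fun _ _ => sum_comm.trans (sum_congr rfl fun _ _ => sum_comm)
    _ = _ := sum_comm.trans (sum_congr rfl fun _ _ => sum_comm)

theorem edgePairSum_comm {A : ι → ι → ℝ} (hA : ∀ i j, A i j = A j i) (f g : ι → ι → ℝ) :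
    edgePairSum A f g = edgePairSum A g f := by
  unfold edgePairSum
  rw [sum_comm]
  refine sum_congr rfl fun j _ => sum_congr rfl fun i _ => ?_
  rw [sum_comm]
  refine sum_congr rfl fun j' _ => sum_congr rfl fun i' _ => ?_
  rw [hA i j, hA i' j']
  ring

theorem edgePairSum_doubleCenter_right (A f h : ι → ι → ℝ) {g : ι → ι → ℝ} (u v : ι → ℝ)
    (c : ℝ) (hg : ∀ j j', g j j' = h j j' - u j - v j' + c) :
    edgePairSum A f g = edgePairSum A f h - edgePairSum A f (fun j _ => u j)
      - edgePairSum A f (fun _ j' => v j') + c * edgePairSum A f (fun _ _ => 1) := by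
  simp only [edgePairSum, hg, mul_sub, mul_add, sum_sub_distrib, sum_add_distrib, mul_sum]
  simp only [mul_one, mul_comm c]

theorem edgePairSum_right_fst (A f : ι → ι → ℝ) (u : ι → ℝ) :
    edgePairSum A f (fun j _ => u j)
      = ∑ i, ∑ j, A i j * u j * ∑ i', (∑ j', A i' j') * f i i' := by
  simp only [edgePairSum, mul_sum, sum_mul]
  refine sum_congr rfl fun i _ => sum_congr rfl fun j _ => sum_congr rfl fun i' _ =>
    sum_congr rfl fun j' _ => ?_
  ring

theorem edgePairSum_right_snd (A f : ι → ι → ℝ) (v : ι → ℝ) :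
    edgePairSum A f (fun _ j' => v j')
      = ∑ i', ∑ j', A i' j' * v j' * ∑ i, (∑ j, A i j) * f i i' := by
  rw [edgePairSum, sum_sum_sum_sum_comm]
  simp only [mul_sum, sum_mul]
  refine sum_congr rfl fun i' _ => sum_congr rfl fun j' _ => sum_congr rfl fun i _ =>
    sum_congr rfl fun j _ => ?_
  ring

theorem edgePairSum_right_eq_of_centered {A f g : ι → ι → ℝ} (h : ι → ι → ℝ) (u v : ι → ℝ)
    (c : ℝ) (hrow : ∀ i, ∑ i', (∑ j', A i' j') * f i i' = 0)
    (hcol : ∀ i', ∑ i, (∑ j, A i j) * f i i' = 0)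
    (hg : ∀ j j', g j j' = h j j' - u j - v j' + c) :
    edgePairSum A f g = edgePairSum A f h := by
  rw [edgePairSum_doubleCenter_right A f h u v c hg, edgePairSum_right_fst,
    edgePairSum_right_fst, edgePairSum_right_snd]
  simp only [hrow, hcol, mul_zero, sum_const_zero, sub_zero, add_zero]

theorem sum_mul_doubleCenter_eq_zero {w : ι → ℝ} (d : ι → ι → ℝ)
    {a : ι → ℝ} {D : ℝ} (hw : ∑ i, w i = 1) (ha : ∀ i, ∑ i', w i' * d i i' = a i)
    (hD : ∑ i, w i * a i = D) (i : ι) :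
    ∑ i', w i' * (d i i' - a i - a i' + D) = 0 := by
  simp only [mul_add, mul_sub, sum_add_distrib, sum_sub_distrib, ← sum_mul, ha, hD, hw]
  ring

end EdgePairSum

theorem dcov_numerator_closed_form_general (n m : ℕ)
    (A : Fin n → Fin n → ℝ)
    (hA_symm : ∀ i j, A i j = A j i)
    (hA_sum : ∑ i : Fin n, ∑ j : Fin n, A i j = 1)
    (x : Fin n → EuclideanSpace ℝ (Fin m))
    (k : Fin n → ℝ) (hk : ∀ i, k i = ∑ j : Fin n, A i j)
    (a : Fin n → ℝ) (ha : ∀ i, a i = ∑ i' : Fin n, k i' * ‖x i - x i'‖)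
    (D : ℝ) (hD : D = ∑ i : Fin n, ∑ i' : Fin n, k i * k i' * ‖x i - x i'‖)
    (δ : Fin n → Fin n → ℝ) (hδ : ∀ i i', δ i i' = ‖x i - x i'‖ - a i - a i' + D) :
    ∑ i : Fin n, ∑ j : Fin n, ∑ i' : Fin n, ∑ j' : Fin n,
        A i j * A i' j' * δ i i' * δ j j'
      = (∑ i : Fin n, ∑ j : Fin n, ∑ i' : Fin n, ∑ j' : Fin n,
            A i j * A i' j' * ‖x i - x i'‖ * ‖x j - x j'‖)
          - 2 * (∑ i : Fin n, ∑ j : Fin n, A i j * a i * a j) + D ^ 2 := by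
  set d : Fin n → Fin n → ℝ := fun p q => ‖x p - x q‖
  have hA_row : ∀ i, ∑ j, A i j = k i := fun i => (hk i).symm
  have hk_sum : ∑ i, k i = 1 := by simpa only [hA_row] using hA_sum
  have ha_row : ∀ i, ∑ i', k i' * d i i' = a i := fun i => (ha i).symm
  have ha_col : ∀ i', ∑ i, k i * d i i' = a i' := fun i' => by
    rw [← ha_row i']
    exact sum_congr rfl fun i _ => congrArg (k i * ·) (norm_sub_rev _ _)
  have hkaD : ∑ i, k i * a i = D := by simp only [hD, ha, mul_sum, mul_assoc]
  have hδ_row : ∀ i, ∑ i', k i' * δ i i' = 0 := fun i => by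
    simp only [hδ]
    exact sum_mul_doubleCenter_eq_zero d hk_sum ha_row hkaD i
  have hδ_col : ∀ i', ∑ i, k i * δ i i' = 0 := fun i' => by
    rw [← hδ_row i']
    exact sum_congr rfl fun i _ => by rw [hδ, hδ, norm_sub_rev]; ring
  change edgePairSum A δ δ = edgePairSum A d d - 2 * _ + D ^ 2
  rw [edgePairSum_right_eq_of_centered d a a D (by simpa only [hA_row])
      (by simpa only [hA_row]) hδ,
    edgePairSum_comm hA_symm, edgePairSum_doubleCenter_right A d d a a D hδ,
    edgePairSum_right_fst, edgePairSum_right_fst, edgePairSum_right_snd]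
  simp only [hA_row, ha_row, ha_col]
  have hconst : ∑ i, ∑ j, A i j * 1 * a i = D := by
    simp only [mul_one, ← sum_mul, hA_row, hkaD]
  have hswap : ∑ i, ∑ j, A i j * a j * a i = ∑ i, ∑ j, A i j * a i * a j :=
    sum_congr rfl fun _ _ => sum_congr rfl fun _ _ => mul_right_comm _ _ _
  rw [hconst, hswap]
  ring

/-- Proposition 2, numerator: closed form for the distance covariance of the edge
distribution. -/
theorem dcov_numerator_closed_form (n m : ℕ)
    (A : Fin n → Fin n → ℝ)
    (hA_nonneg : ∀ i j, 0 ≤ A i j)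
    (hA_symm : ∀ i j, A i j = A j i)
    (hA_sum : ∑ i : Fin n, ∑ j : Fin n, A i j = 1)
    (x : Fin n → EuclideanSpace ℝ (Fin m))
    (k : Fin n → ℝ) (hk : ∀ i, k i = ∑ j : Fin n, A i j)
    (a : Fin n → ℝ) (ha : ∀ i, a i = ∑ i' : Fin n, k i' * ‖x i - x i'‖)
    (D : ℝ) (hD : D = ∑ i : Fin n, ∑ i' : Fin n, k i * k i' * ‖x i - x i'‖)
    (δ : Fin n → Fin n → ℝ) (hδ : ∀ i i', δ i i' = ‖x i - x i'‖ - a i - a i' + D) :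
    ∑ i : Fin n, ∑ j : Fin n, ∑ i' : Fin n, ∑ j' : Fin n,
        A i j * A i' j' * δ i i' * δ j j'
      = (∑ i : Fin n, ∑ j : Fin n, ∑ i' : Fin n, ∑ j' : Fin n,
            A i j * A i' j' * ‖x i - x i'‖ * ‖x j - x j'‖)
          - 2 * (∑ i : Fin n, ∑ j : Fin n, A i j * a i * a j) + D ^ 2 :=
  dcov_numerator_closed_form_general n m A hA_symm hA_sum x k hk a ha D hD δ hδ
end

section
/- (Proposition 2: closed form for the squared vector assortativity / distance correlation.) Let A be a normalized symmetric adjacency matrix on Fin n, k i := ∑_j A i j, and x : Fin n → E a Euclidean-space-valued node attribute. Define a i := ∑_{i'} (k i') * ‖x i − x i'‖, D := ∑_{i,i'} (k i) * (k i') * ‖x i − x i'‖, δ i i' := ‖x i − x i'‖ − a i − a i' + D, f₁ := ∑_{i,j} ∑_{i',j'} (A i j) * (A i' j') * ‖x i − x i'‖ * ‖x j − x j'‖ − 2 * ∑_{i,j} (A i j) * (a i) * (a j) + D^2, and f₂ := ∑_{i,i'} (k i) * (k i') * ‖x i − x i'‖^2 − 2 * ∑_i (k i) * (a i)^2 + D^2.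 If f₂ ≠ 0, then the squared distance correlation r² := (∑_{i,j} ∑_{i',j'} (A i j) * (A i' j') * (δ i i') * (δ j j')) / (∑_{i,i'} (k i) * (k i') * (δ i i')^2) equals f₁ / f₂. -/
/-!
Write `d i i' = ‖x i - x i'‖` and let `(X, Y)`, `(X', Y')` be independent random edges.
The double-centred `δ` has zero `k`-weighted mean in each argument, and both endpoints of an
edge have law `k`; hence `𝔼[δ(X, X') (u Y + v Y')] = 0` for all `u`, `v`, so in the numerator
one factor `δ` may be replaced by `d`. Expanding the remaining `δ` gives the three terms of `f₁`.
The denominator is the same expectation for the diagonal coupling `X = Y`, whose marginals are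
also `k`, and so equals `f₂`.
-/

namespace DistanceCovariance

open Finset

variable {ι : Type*} [Fintype ι]

theorem sum_comm_pairs {M : Type*} [AddCommMonoid M] (F : ι → ι → ι → ι → M) :
    ∑ i, ∑ j, ∑ i', ∑ j', F i j i' j' = ∑ i', ∑ j', ∑ i, ∑ j, F i j i' j' := by
  calc _ = ∑ i, ∑ i', ∑ j, ∑ j', F i j i' j' := sum_congr rfl fun _ _ => sum_comm
    _ = ∑ i', ∑ i, ∑ j', ∑ j, F i j i' j' := by
      rw [sum_comm]
      exact sum_congr rfl fun _ _ => sum_congr rfl fun _ _ => sum_comm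
    _ = _ := sum_congr rfl fun _ _ => sum_comm

variable {R : Type*} [CommRing R]

def rowMean (k : ι → R) (d : ι → ι → R) (i : ι) : R := ∑ i', k i' * d i i'

def grandMean (k : ι → R) (d : ι → ι → R) : R := ∑ i, ∑ i', k i * k i' * d i i'

def doubleCenter (k : ι → R) (d : ι → ι → R) (i i' : ι) : R :=
  d i i' - rowMean k d i - rowMean k d i' + grandMean k d

/-- `𝔼[f(X, X') g(Y, Y')]` for independent pairs `(X, Y)`, `(X', Y')` with joint weights `W`. -/
def pairExpect (W f g : ι → ι → R) : R :=
  ∑ i, ∑ j, ∑ i', ∑ j', W i j * W i' j' * f i i' * g j j'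

section Centering

variable (k : ι → R) (d : ι → ι → R)

theorem sum_mul_rowMean : ∑ i, k i * rowMean k d i = grandMean k d := by
  simp only [rowMean, grandMean, mul_sum, mul_assoc]

theorem rowMean_doubleCenter (hk : ∑ i, k i = 1) (i : ι) :
    rowMean k (doubleCenter k d) i = 0 := by
  rw [rowMean]
  simp only [doubleCenter, mul_add, mul_sub, sum_add_distrib, sum_sub_distrib, ← sum_mul, hk,
    one_mul, sum_mul_rowMean]
  rw [rowMean]
  ring

theorem doubleCenter_comm (hd : ∀ i i', d i i' = d i' i) (i i' : ι) :
    doubleCenter k d i i' = doubleCenter k d i' i := by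
  rw [doubleCenter, doubleCenter, hd]
  ring

end Centering

section PairExpect

variable (W f g h : ι → ι → R)

theorem pairExpect_add_left :
    pairExpect W (f + g) h = pairExpect W f h + pairExpect W g h := by
  simp only [pairExpect, Pi.add_apply, mul_add, add_mul, sum_add_distrib]

theorem pairExpect_add_right :
    pairExpect W f (g + h) = pairExpect W f g + pairExpect W f h := by
  simp only [pairExpect, Pi.add_apply, mul_add, sum_add_distrib]

theorem pairExpect_swap :
    pairExpect W (fun i i' => f i' i) (fun j j' => g j' j) = pairExpect W f g := by
  rw [pairExpect, sum_comm_pairs]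
  exact sum_congr rfl fun _ _ => sum_congr rfl fun _ _ => sum_congr rfl fun _ _ =>
    sum_congr rfl fun _ _ => by ring

theorem pairExpect_transpose : pairExpect (fun i j => W j i) g f = pairExpect W f g := by
  rw [pairExpect, sum_comm]
  refine sum_congr rfl fun _ _ => sum_congr rfl fun _ _ => ?_
  rw [sum_comm]
  exact sum_congr rfl fun _ _ => sum_congr rfl fun _ _ => by ring

theorem pairExpect_fst_right (k : ι → R) (hW : ∀ i, ∑ j, W i j = k i) (u : ι → R) :
    pairExpect W f (fun j _ => u j) = ∑ i, ∑ j, W i j * rowMean k f i * u j := by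
  simp only [pairExpect, rowMean, ← hW, mul_sum, sum_mul]
  exact sum_congr rfl fun _ _ => sum_congr rfl fun _ _ => sum_congr rfl fun _ _ =>
    sum_congr rfl fun _ _ => by ring

end PairExpect

theorem pairExpect_doubleCenter {W : ι → ι → R} {k : ι → R} (hrow : ∀ i, ∑ j, W i j = k i)
    (hcol : ∀ j, ∑ i, W i j = k j) (hk : ∑ i, k i = 1) {d : ι → ι → R}
    (hd : ∀ i i', d i i' = d i' i) :
    pairExpect W (doubleCenter k d) (doubleCenter k d) =
      pairExpect W d d - 2 * ∑ i, ∑ j, W i j * rowMean k d i * rowMean k d j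
        + grandMean k d ^ 2 := by
  set a := rowMean k d
  set D := grandMean k d
  set δ := doubleCenter k d
  have hsplit : δ = d + (fun i _ => D - a i) + (fun _ i' => -a i') := by
    funext i i'
    simp only [δ, doubleCenter, Pi.add_apply]
    ring
  have hδ_fst : pairExpect W δ (fun j _ => D - a j) = 0 := by
    simp [pairExpect_fst_right W δ k hrow, δ, rowMean_doubleCenter k d hk]
  have hδ_snd : pairExpect W δ (fun _ j' => -a j') = 0 := by
    rw [← pairExpect_swap]
    simp [δ, ← doubleCenter_comm k d hd, pairExpect_fst_right _ _ k hrow,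
      rowMean_doubleCenter k d hk]
  have hd_fst (u : ι → R) :
      pairExpect W (fun i _ => u i) d = ∑ i, ∑ j, W i j * u i * a j := by
    rw [← pairExpect_transpose, pairExpect_fst_right _ _ k hcol, sum_comm]
    exact sum_congr rfl fun _ _ => sum_congr rfl fun _ _ => by ring
  have hd_snd (u : ι → R) :
      pairExpect W (fun _ i' => u i') d = ∑ i, ∑ j, W i j * u i * a j := by
    have hd_swap : (fun j j' => d j' j) = d := funext₂ fun j j' => hd j' j
    rw [← pairExpect_swap, hd_swap]
    exact hd_fst u
  have hD : ∑ i, ∑ j, W i j * D * a j = D ^ 2 := by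
    calc ∑ i, ∑ j, W i j * D * a j = ∑ j, (∑ i, W i j) * D * a j := by
          rw [sum_comm]; simp only [sum_mul]
      _ = D * ∑ j, k j * a j := by
          simp only [hcol, mul_sum]
          exact sum_congr rfl fun _ _ => by ring
      _ = D ^ 2 := by rw [sum_mul_rowMean, sq]
  calc pairExpect W δ δ
        = pairExpect W δ (d + (fun j _ => D - a j) + (fun _ j' => -a j')) := by rw [← hsplit]
    _ = pairExpect W δ d := by
        rw [pairExpect_add_right, pairExpect_add_right, hδ_fst, hδ_snd, add_zero, add_zero]
    _ = pairExpect W (d + (fun i _ => D - a i) + (fun _ i' => -a i')) d := by rw [← hsplit]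
    _ = _ := by
        rw [pairExpect_add_left, pairExpect_add_left, hd_fst, hd_snd]
        simp only [mul_sub, sub_mul, mul_neg, neg_mul, sum_sub_distrib, sum_neg_distrib, hD]
        ring

section Diagonal

variable [DecidableEq ι] (k : ι → R)

theorem sum_diagonal_apply_left (i : ι) : ∑ j, Matrix.diagonal k i j = k i := by
  simp [Matrix.diagonal_apply]

theorem sum_diagonal_apply_right (j : ι) : ∑ i, Matrix.diagonal k i j = k j := by
  simp [Matrix.diagonal_apply]

theorem pairExpect_diagonal_self (f : ι → ι → R) :
    pairExpect (Matrix.diagonal k) f f = ∑ i, ∑ i', k i * k i' * f i i' ^ 2 := by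
  simp [pairExpect, Matrix.diagonal_apply, sq, mul_assoc]

theorem sum_diagonal_mul_mul (u : ι → R) :
    ∑ i, ∑ j, Matrix.diagonal k i j * u i * u j = ∑ i, k i * u i ^ 2 := by
  simp [Matrix.diagonal_apply, sq, mul_assoc]

end Diagonal

end DistanceCovariance

open DistanceCovariance

theorem vector_assortativity_closed_form_general (n m : ℕ)
    (A : Fin n → Fin n → ℝ)
    (hA_symm : ∀ i j, A i j = A j i)
    (hA_sum : ∑ i : Fin n, ∑ j : Fin n, A i j = 1)
    (x : Fin n → EuclideanSpace ℝ (Fin m))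
    (k : Fin n → ℝ) (hk : ∀ i, k i = ∑ j : Fin n, A i j)
    (a : Fin n → ℝ) (ha : ∀ i, a i = ∑ i' : Fin n, k i' * ‖x i - x i'‖)
    (D : ℝ) (hD : D = ∑ i : Fin n, ∑ i' : Fin n, k i * k i' * ‖x i - x i'‖)
    (δ : Fin n → Fin n → ℝ) (hδ : ∀ i i', δ i i' = ‖x i - x i'‖ - a i - a i' + D)
    (f₁ : ℝ) (hf₁ : f₁ = (∑ i : Fin n, ∑ j : Fin n, ∑ i' : Fin n, ∑ j' : Fin n,
          A i j * A i' j' * ‖x i - x i'‖ * ‖x j - x j'‖)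
        - 2 * (∑ i : Fin n, ∑ j : Fin n, A i j * a i * a j) + D ^ 2)
    (f₂ : ℝ) (hf₂ : f₂ = (∑ i : Fin n, ∑ i' : Fin n, k i * k i' * ‖x i - x i'‖ ^ 2)
        - 2 * (∑ i : Fin n, k i * a i ^ 2) + D ^ 2) :
    (∑ i : Fin n, ∑ j : Fin n, ∑ i' : Fin n, ∑ j' : Fin n,
          A i j * A i' j' * δ i i' * δ j j')
        / (∑ i : Fin n, ∑ i' : Fin n, k i * k i' * δ i i' ^ 2)
      = f₁ / f₂ := by
  obtain rfl : a = rowMean k fun i i' => ‖x i - x i'‖ := funext ha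
  obtain rfl : D = grandMean k fun i i' => ‖x i - x i'‖ := hD
  obtain rfl : δ = doubleCenter k fun i i' => ‖x i - x i'‖ := funext₂ hδ
  subst hf₁ hf₂
  set d : Fin n → Fin n → ℝ := fun i i' => ‖x i - x i'‖
  have hd : ∀ i i', d i i' = d i' i := fun i i' => norm_sub_rev (x i) (x i')
  have hrow : ∀ i, ∑ j, A i j = k i := fun i => (hk i).symm
  have hcol : ∀ j, ∑ i, A i j = k j := fun j => by simp only [hA_symm _ j, hrow]
  have hk1 : ∑ i, k i = 1 := by simpa only [hrow] using hA_sum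
  have hnum := pairExpect_doubleCenter hrow hcol hk1 hd
  -- the diagonal coupling `X = Y` turns the numerator into the denominator
  have hden := pairExpect_doubleCenter (sum_diagonal_apply_left k) (sum_diagonal_apply_right k)
    hk1 hd
  rw [pairExpect_diagonal_self, pairExpect_diagonal_self, sum_diagonal_mul_mul] at hden
  exact congrArg₂ (· / ·) hnum hden

/-- Proposition 2: closed form for the squared vector assortativity (squared distance
correlation) `r² = f₁ / f₂`. -/
theorem vector_assortativity_closed_form (n m : ℕ)
    (A : Fin n → Fin n → ℝ)
    (hA_nonneg : ∀ i j, 0 ≤ A i j)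
    (hA_symm : ∀ i j, A i j = A j i)
    (hA_sum : ∑ i : Fin n, ∑ j : Fin n, A i j = 1)
    (x : Fin n → EuclideanSpace ℝ (Fin m))
    (k : Fin n → ℝ) (hk : ∀ i, k i = ∑ j : Fin n, A i j)
    (a : Fin n → ℝ) (ha : ∀ i, a i = ∑ i' : Fin n, k i' * ‖x i - x i'‖)
    (D : ℝ) (hD : D = ∑ i : Fin n, ∑ i' : Fin n, k i * k i' * ‖x i - x i'‖)
    (δ : Fin n → Fin n → ℝ) (hδ : ∀ i i', δ i i' = ‖x i - x i'‖ - a i - a i' + D)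
    (f₁ : ℝ) (hf₁ : f₁ = (∑ i : Fin n, ∑ j : Fin n, ∑ i' : Fin n, ∑ j' : Fin n,
          A i j * A i' j' * ‖x i - x i'‖ * ‖x j - x j'‖)
        - 2 * (∑ i : Fin n, ∑ j : Fin n, A i j * a i * a j) + D ^ 2)
    (f₂ : ℝ) (hf₂ : f₂ = (∑ i : Fin n, ∑ i' : Fin n, k i * k i' * ‖x i - x i'‖ ^ 2)
        - 2 * (∑ i : Fin n, k i * a i ^ 2) + D ^ 2)
    (hf₂_ne : f₂ ≠ 0) :
    (∑ i : Fin n, ∑ j : Fin n, ∑ i' : Fin n, ∑ j' : Fin n,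
          A i j * A i' j' * δ i i' * δ j j')
        / (∑ i : Fin n, ∑ i' : Fin n, k i * k i' * δ i i' ^ 2)
      = f₁ / f₂ :=
  vector_assortativity_closed_form_general n m A hA_symm hA_sum x k hk a ha D hD δ hδ f₁ hf₁ f₂ hf₂
end
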